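/- For any pairwise distinct i_1,…,i_r ∈ 𝕀 and any integers l_1,…,l_r ≥ 0, the numbers of fixed points satisfy P(D_{i_1} ≥ l_1, …, D_{i_r} ≥ l_r) = p_{i_1}^{l_1} ⋯ p_{i_r}^{l_r} if l_1 + ⋯ + l_r ≤ n, and P(D_{i_1} ≥ l_1, …, D_{i_r} ≥ l_r) = 0 otherwise. -/

import Mathlib

/-!
Write `std(w)(x)` as the rank of `(w x, x)` in the lexicographic order. A position `x` with
`w x = a` is then a fixed point iff the number of letters `≠ a` before `x` equals the number of
letters `< a`; so the fixed points of value `a` form a block of equal letters, and deleting one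
of them keeps every other fixed point fixed. Deleting a fixed point of value `a` (which one does
not matter) is therefore a bijection from the words of length `m + 1` with at least `l_a + 1` such
fixed points onto the words of length `m` with at least `l_a` of them; the inverse inserts `a`
where it becomes a fixed point, and such a place exists by a discrete intermediate value argument.
The bijection divides the weight `∏ₓ p (w x)` by `p a`, so induction on the length gives
`∑_w ∏ₓ p (w x) = (∑ p)^(n - ∑ l) ∏ p_i^(l_i)`, which for i.i.d. letters is the probability.
-/

open MeasureTheory ProbabilityTheory
open scoped ENNReal

section General

open Finset

lemma Nat.exists_eq_of_map_succ_le {f : ℕ → ℕ} (hf : ∀ c, f (c + 1) ≤ f c + 1) {A m : ℕ}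
    (h0 : f 0 ≤ A) (hm : A ≤ f m) : ∃ c ≤ m, f c = A := by
  induction m with
  | zero => exact ⟨0, le_rfl, le_antisymm h0 hm⟩
  | succ m ih =>
    by_cases h : A ≤ f m
    · obtain ⟨c, hc, hfc⟩ := ih h
      exact ⟨c, hc.trans m.le_succ, hfc⟩
    · exact ⟨m + 1, le_rfl, by have := hf m; omega⟩

lemma Fin.card_filter_univ_succAbove {n : ℕ} (p : Fin (n + 1) → Prop) [DecidablePred p]
    (k : Fin (n + 1)) : #{y | p y} = (if p k then 1 else 0) + #{x : Fin n | p (k.succAbove x)} := by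
  simp only [card_filter, Fin.sum_univ_succAbove _ k]

lemma Fin.removeNth_eq_removeNth_of_le {n : ℕ} {β : Type*} {w : Fin (n + 1) → β}
    {k k' : Fin (n + 1)} (hkk : k ≤ k') (hw : ∀ y, k ≤ y → y ≤ k' → w y = w k) :
    k.removeNth w = k'.removeNth w := by
  funext z
  simp only [Fin.removeNth]
  rcases lt_or_ge z.castSucc k with h | h
  · rw [Fin.succAbove_of_castSucc_lt _ _ h, Fin.succAbove_of_castSucc_lt _ _ (h.trans_le hkk)]
  rcases lt_or_ge z.castSucc k' with h' | h'
  · rw [Fin.succAbove_of_le_castSucc _ _ h, Fin.succAbove_of_castSucc_lt _ _ h',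
      hw _ (h.trans (Fin.castSucc_le_succ z)) (Fin.castSucc_lt_iff_succ_le.1 h'), hw _ h h'.le]
  · rw [Fin.succAbove_of_le_castSucc _ _ h, Fin.succAbove_of_le_castSucc _ _ h']

lemma Fin.insertNth_eq_insertNth_of_le {m : ℕ} {β : Type*} {v : Fin m → β} {a : β}
    {c c' : Fin (m + 1)} (hcc : c ≤ c')
    (hv : ∀ y : Fin m, c ≤ y.castSucc → y.castSucc < c' → v y = a) :
    (c.insertNth a v : Fin (m + 1) → β) = c'.insertNth a v := by
  have hw : ∀ z, c ≤ z → z ≤ c' → (c'.insertNth a v : Fin (m + 1) → β) z = a := by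
    intro z h1 h2
    rcases h2.lt_or_eq with h2 | rfl
    · obtain ⟨y, rfl⟩ := Fin.exists_castSucc_eq.2 (Fin.ne_last_of_lt h2)
      rw [← Fin.succAbove_of_castSucc_lt _ _ h2, Fin.insertNth_apply_succAbove]
      exact hv y h1 h2
    · exact Fin.insertNth_apply_same _ _ _
  rw [Fin.insertNth_eq_iff, Fin.removeNth_eq_removeNth_of_le hcc
    (fun z h1 h2 => (hw z h1 h2).trans (hw c le_rfl hcc).symm), Fin.removeNth_insertNth]
  exact ⟨(hw c le_rfl hcc).symm, rfl⟩

lemma eq_zero_or_exists_eq_add_single {ι : Type*} [DecidableEq ι] (l : ι → ℕ) :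
    l = 0 ∨ ∃ (l' : ι → ℕ) (t₀ : ι), l = l' + Pi.single t₀ 1 := by
  by_cases h : l = 0
  · exact Or.inl h
  obtain ⟨t₀, ht₀⟩ := Function.ne_iff.1 h
  refine Or.inr ⟨l - Pi.single t₀ 1, t₀, funext fun t => ?_⟩
  by_cases ht : t = t₀
  · subst ht; simp at ht₀ ⊢; omega
  · simp [ht]

lemma ENNReal.tsum_prod_eq_pow {β : Type*} (p : β → ℝ≥0∞) (n : ℕ) :
    ∑' w : Fin n → β, ∏ x, p (w x) = (∑' b, p b) ^ n := by
  induction n with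
  | zero => simp
  | succ n ih =>
    rw [← (Fin.consEquiv fun _ => β).tsum_eq, ENNReal.tsum_prod', pow_succ', ← ih,
      ← ENNReal.tsum_mul_right]
    refine tsum_congr fun b => ?_
    rw [← ENNReal.tsum_mul_left]
    refine tsum_congr fun v => ?_
    simp [Fin.prod_univ_succ]

lemma measure_setOf_eq_tsum_prod {Ω ι β : Type*} [Fintype ι] [MeasurableSpace Ω]
    [MeasurableSpace β] [MeasurableSingletonClass β] {P : Measure Ω} {μ : Measure β} {𝕀 : Set β}
    (h𝕀 : 𝕀.Countable) (hμ : μ 𝕀ᶜ = 0) {G : ι → Ω → β} (hmeas : ∀ x, Measurable (G x))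
    (hindep : iIndepFun G P) (hdist : ∀ x, P.map (G x) = μ) (Q : (ι → β) → Prop) :
    P {ω | Q fun x => G x ω} = ∑' w : {w : ι → 𝕀 // Q fun x => w x}, ∏ x, μ {(w.1 x : β)} := by
  have : Countable 𝕀 := h𝕀.to_subtype
  have hmap (x : ι) {s : Set β} (hs : MeasurableSet s) : P (G x ⁻¹' s) = μ s := by
    rw [← hdist x, Measure.map_apply (hmeas x) hs]
  have hnull : P {ω | ∀ x, G x ω ∈ 𝕀}ᶜ = 0 := by
    simp only [Set.compl_ofPred, not_forall, Set.ofPred_exists]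
    exact measure_iUnion_null fun x => (hmap x h𝕀.measurableSet.compl).trans hμ
  have hset : {ω | Q fun x => G x ω} ∩ {ω | ∀ x, G x ω ∈ 𝕀} =
      ⋃ w : {w : ι → 𝕀 // Q fun x => w x}, ⋂ x, G x ⁻¹' {(w.1 x : β)} := by
    ext ω
    simp only [Set.mem_inter_iff, Set.mem_ofPred_eq, Set.mem_iUnion, Set.mem_iInter,
      Set.mem_preimage, Set.mem_singleton_iff, Subtype.exists]
    constructor
    · rintro ⟨hQ, hω⟩
      exact ⟨fun x => ⟨G x ω, hω x⟩, hQ, fun x => rfl⟩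
    · rintro ⟨w, hQ, hw⟩
      have : (fun x => G x ω) = fun x => (w x : β) := funext hw
      exact ⟨this ▸ hQ, fun x => hw x ▸ (w x).2⟩
  rw [← measure_inter_conull hnull, hset, measure_iUnion]
  · refine tsum_congr fun w => ?_
    rw [hindep.meas_iInter fun x => ⟨{(w.1 x : β)}, measurableSet_singleton _, rfl⟩]
    exact Finset.prod_congr rfl fun x _ => hmap x (measurableSet_singleton _)
  · intro w w' hne
    refine Set.disjoint_left.2 fun ω hω hω' => hne (Subtype.ext (funext fun x => Subtype.ext ?_))
    simp only [Set.mem_iInter, Set.mem_preimage, Set.mem_singleton_iff] at hω hω'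
    rw [← hω x, ← hω' x]
  · exact fun w => MeasurableSet.iInter fun x => hmeas x (measurableSet_singleton _)

end General

namespace Standardization

open Finset

variable {α : Type*} [LinearOrder α] {n m : ℕ}

/-- `std(w)(x)`, counted from `0`. -/
def stdRank (w : Fin n → α) (x : Fin n) : ℕ := #{y | toLex (w y, y) < toLex (w x, x)}

/-- The paper's `D_a` for the word `w`. -/
def fixedCount (w : Fin n → α) (a : α) : ℕ := #{x | stdRank w x = x ∧ w x = a}

lemma stdRank_lt_stdRank_iff {w : Fin n → α} {x y : Fin n} :
    stdRank w x < stdRank w y ↔ toLex (w x, x) < toLex (w y, y) := by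
  constructor
  · intro h
    by_contra! hyx
    refine h.not_ge (card_le_card fun z hz => ?_)
    simp only [mem_filter, mem_univ, true_and] at hz ⊢
    exact hz.trans_le hyx
  · intro h
    apply card_lt_card
    rw [ssubset_iff_of_subset fun z hz => by
      simp only [mem_filter, mem_univ, true_and] at hz ⊢; exact hz.trans h]
    exact ⟨x, by simpa using h, by simp⟩

lemma stdRank_injective (w : Fin n → α) : Function.Injective (stdRank w) := by
  intro x y h
  have hxy : toLex (w x, x) = toLex (w y, y) := by
    by_contra hne
    rcases lt_or_gt_of_ne hne with hlt | hlt
    · exact (stdRank_lt_stdRank_iff.2 hlt).ne h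
    · exact (stdRank_lt_stdRank_iff.2 hlt).ne' h
  exact congrArg Prod.snd (toLex.injective hxy)

lemma stdRank_eq_of_lt_iff {w : Fin n → α} (σ : Equiv.Perm (Fin n))
    (hσ : ∀ j k, σ j < σ k ↔ toLex (w j, j) < toLex (w k, k)) (x : Fin n) :
    stdRank w x = σ x := by
  rw [stdRank, ← Fin.card_Iio (σ x)]
  exact card_equiv σ (by simp [hσ])

lemma ncard_fixedPoints_eq_fixedCount {w : Fin n → α} (σ : Equiv.Perm (Fin n))
    (hσ : ∀ j k, σ j < σ k ↔ toLex (w j, j) < toLex (w k, k)) (a : α) :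
    {x | σ x = x ∧ w x = a}.ncard = fixedCount w a := by
  rw [fixedCount, ← Set.ncard_coe_finset]
  congr 1
  ext x
  simp [stdRank_eq_of_lt_iff σ hσ, Fin.ext_iff]

lemma fixedCount_comp_of_strictMono {β : Type*} [LinearOrder β] {f : α → β} (hf : StrictMono f)
    (w : Fin n → α) (a : α) : fixedCount (f ∘ w) (f a) = fixedCount w a := by
  have hrank : stdRank (f ∘ w) = stdRank w := funext fun x => by
    simp [stdRank, Prod.Lex.toLex_lt_toLex, hf.lt_iff_lt, hf.injective.eq_iff]
  simp [fixedCount, hrank, hf.injective.eq_iff]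

lemma stdRank_eq_self_iff {w : Fin n → α} {x : Fin n} :
    stdRank w x = x ↔ #{y | w y < w x} = #{y : Fin n | y < x ∧ w y ≠ w x} := by
  have hrank : stdRank w x = #{y | w y < w x} + #{y : Fin n | y < x ∧ w y = w x} := by
    rw [stdRank, ← card_union_of_disjoint, ← filter_or]
    · simp [Prod.Lex.toLex_lt_toLex, and_comm]
    · exact disjoint_filter.2 fun y _ h1 h2 => h1.ne h2.2
  have hx : (x : ℕ) = #{y : Fin n | y < x ∧ w y = w x}
      + #{y : Fin n | y < x ∧ w y ≠ w x} := by
    rw [← filter_filter, ← filter_filter, card_filter_add_card_filter_not, ← Fin.card_Iio]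
    congr 1; ext; simp
  omega

lemma apply_eq_of_stdRank_eq_self {w : Fin n → α} {x x' y : Fin n} (hx : stdRank w x = x)
    (hx' : stdRank w x' = x') (hw : w x' = w x) (hxy : x ≤ y) (hyx' : y ≤ x') : w y = w x := by
  rcases hyx'.lt_or_eq with hlt | rfl
  · rw [stdRank_eq_self_iff] at hx hx'
    rw [hw] at hx'
    have hsub : ({y | y < x ∧ w y ≠ w x} : Finset (Fin n)) ⊆
        ({y | y < x' ∧ w y ≠ w x} : Finset _) := by
      intro y; simp only [mem_filter, mem_univ, true_and]
      exact fun hy => ⟨hy.1.trans_le (hxy.trans hlt.le), hy.2⟩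
    have heq := eq_of_subset_of_card_le hsub (by rw [← hx, ← hx'])
    by_contra hne
    have hy : y ∈ ({y | y < x' ∧ w y ≠ w x} : Finset (Fin n)) := by simp [hlt, hne]
    rw [← heq] at hy
    exact (mem_filter.1 hy).2.1.not_ge hxy
  · exact hw

lemma stdRank_succAbove (w : Fin (n + 1) → α) (k : Fin (n + 1)) (x : Fin n) :
    stdRank w (k.succAbove x) =
      (if toLex (w k, k) < toLex (w (k.succAbove x), k.succAbove x) then 1 else 0)
        + stdRank (k.removeNth w) x := by
  rw [stdRank, Fin.card_filter_univ_succAbove _ k]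
  simp [stdRank, Fin.removeNth, Prod.Lex.toLex_lt_toLex]

lemma stdRank_removeNth_eq_self_iff {w : Fin (n + 1) → α} {k : Fin (n + 1)}
    (hk : stdRank w k = k) (x : Fin n) :
    stdRank (k.removeNth w) x = x ↔ stdRank w (k.succAbove x) = k.succAbove x := by
  -- Deleting `k` lowers a position, and (as `k` is fixed) a rank, by one iff it exceeds `k`.
  have hrank := stdRank_succAbove w k x
  have hlt : toLex (w k, k) < toLex (w (k.succAbove x), k.succAbove x) ↔
      (k : ℕ) < stdRank w (k.succAbove x) := by
    rw [← stdRank_lt_stdRank_iff, hk]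
  have hne : stdRank w (k.succAbove x) ≠ k :=
    fun h => Fin.succAbove_ne k x (stdRank_injective w (h.trans hk.symm))
  have hpos : ((k.succAbove x : Fin (n + 1)) : ℕ) = if (x : ℕ) < k then (x : ℕ) else x + 1 := by
    rcases lt_or_ge x.castSucc k with h | h
    · rw [Fin.succAbove_of_castSucc_lt _ _ h, if_pos (show (x : ℕ) < k from h), Fin.val_castSucc]
    · rw [Fin.succAbove_of_le_castSucc _ _ h, if_neg (show ¬ (x : ℕ) < k from not_lt.2 h),
        Fin.val_succ]
  simp only [hlt] at hrank
  rw [hpos]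
  split_ifs at hrank ⊢ <;> omega

lemma fixedCount_eq_add_fixedCount_removeNth {w : Fin (n + 1) → α} {k : Fin (n + 1)}
    (hk : stdRank w k = k) (b : α) :
    fixedCount w b = (if w k = b then 1 else 0) + fixedCount (k.removeNth w) b := by
  rw [fixedCount, Fin.card_filter_univ_succAbove _ k]
  simp only [hk, true_and, fixedCount, stdRank_removeNth_eq_self_iff hk, Fin.removeNth]

lemma removeNth_eq_of_stdRank_eq_self {w : Fin (n + 1) → α} {k k' : Fin (n + 1)}
    (hk : stdRank w k = k) (hk' : stdRank w k' = k') (hw : w k' = w k) :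
    k.removeNth w = k'.removeNth w := by
  wlog hkk : k ≤ k' generalizing k k'
  · exact (this hk' hk hw.symm (le_of_not_ge hkk)).symm
  exact Fin.removeNth_eq_removeNth_of_le hkk fun y h1 h2 =>
    apply_eq_of_stdRank_eq_self hk hk' hw h1 h2

lemma stdRank_insertNth_self_eq_self_iff {v : Fin m → α} {a : α} {c : Fin (m + 1)} :
    stdRank (c.insertNth a v) c = c ↔
      #{y | v y < a} = #{y : Fin m | y.castSucc < c ∧ v y ≠ a} := by
  rw [stdRank_eq_self_iff, Fin.card_filter_univ_succAbove _ c, Fin.card_filter_univ_succAbove _ c]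
  simp [Fin.succAbove_lt_iff_castSucc_lt]

lemma insertNth_eq_of_stdRank_eq_self {v : Fin m → α} {a : α} {c c' : Fin (m + 1)}
    (hc : stdRank (c.insertNth a v) c = c) (hc' : stdRank (c'.insertNth a v) c' = c') :
    (c.insertNth a v : Fin (m + 1) → α) = c'.insertNth a v := by
  wlog hcc : c ≤ c' generalizing c c'
  · exact (this hc' hc (le_of_not_ge hcc)).symm
  rw [stdRank_insertNth_self_eq_self_iff] at hc hc'
  refine Fin.insertNth_eq_insertNth_of_le hcc fun y h1 h2 => ?_
  have hsub : ({y | y.castSucc < c ∧ v y ≠ a} : Finset (Fin m)) ⊆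
      ({y | y.castSucc < c' ∧ v y ≠ a} : Finset _) := by
    intro y; simp only [mem_filter, mem_univ, true_and]
    exact fun hy => ⟨hy.1.trans_le hcc, hy.2⟩
  have heq := eq_of_subset_of_card_le hsub (by rw [← hc, ← hc'])
  by_contra hne
  have hy : y ∈ ({y | y.castSucc < c' ∧ v y ≠ a} : Finset (Fin m)) := by simp [h2, hne]
  rw [← heq] at hy
  exact (mem_filter.1 hy).2.1.not_ge h1

lemma exists_stdRank_insertNth_self_eq_self (v : Fin m → α) (a : α) :
    ∃ c : Fin (m + 1), stdRank (c.insertNth a v) c = c := by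
  simp_rw [stdRank_insertNth_self_eq_self_iff]
  -- `N c` counts the letters `≠ a` before position `c`: it climbs in unit steps from `0` to
  -- at least the number of letters `< a`.
  set N : ℕ → ℕ := fun c => #{y : Fin m | (y : ℕ) < c ∧ v y ≠ a}
  have hstep : ∀ c, N (c + 1) ≤ N c + 1 := by
    intro c
    calc N (c + 1)
        ≤ #(({y | (y : ℕ) < c ∧ v y ≠ a} : Finset (Fin m)) ∪
            ({y | (y : ℕ) = c} : Finset (Fin m))) :=
          card_le_card fun y => by
            simp only [mem_union, mem_filter, mem_univ, true_and]
            exact fun h => (Nat.lt_succ_iff_lt_or_eq.1 h.1).imp (fun h1 => ⟨h1, h.2⟩) id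
      _ ≤ N c + #{y : Fin m | (y : ℕ) = c} := card_union_le _ _
      _ ≤ N c + 1 := by
          gcongr
          exact card_le_one.2 fun y hy z hz => Fin.ext (by simp only [mem_filter] at hy hz; omega)
  have hm : #{y | v y < a} ≤ N m :=
    card_le_card fun y => by
      simp only [mem_filter, mem_univ, true_and]; exact fun hy => ⟨y.isLt, hy.ne⟩
  obtain ⟨c, hcm, hc⟩ := Nat.exists_eq_of_map_succ_le hstep (by simp [N]) hm
  exact ⟨⟨c, by omega⟩, hc.symm⟩

/-- By `removeNth_eq_of_stdRank_eq_self` it does not matter which fixed point of value `a` is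
deleted. The `else` branch is junk. -/
noncomputable def eraseFixed (w : Fin (n + 1) → α) (a : α) : Fin n → α :=
  if h : ∃ k, stdRank w k = k ∧ w k = a then h.choose.removeNth w else Fin.removeNth 0 w

lemma eraseFixed_eq {w : Fin (n + 1) → α} {a : α} {k : Fin (n + 1)} (hk : stdRank w k = k)
    (hwk : w k = a) : eraseFixed w a = k.removeNth w := by
  have h : ∃ k', stdRank w k' = k' ∧ w k' = a := ⟨k, hk, hwk⟩
  rw [eraseFixed, dif_pos h]
  exact removeNth_eq_of_stdRank_eq_self h.choose_spec.1 hk (hwk.trans h.choose_spec.2.symm)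

/-- By `insertNth_eq_of_stdRank_eq_self` it does not matter at which of the positions where it
becomes a fixed point `a` is inserted. -/
noncomputable def insertFixed (v : Fin m → α) (a : α) : Fin (m + 1) → α :=
  (exists_stdRank_insertNth_self_eq_self v a).choose.insertNth a v

lemma insertFixed_eq {v : Fin m → α} {a : α} {c : Fin (m + 1)}
    (hc : stdRank (c.insertNth a v) c = c) : insertFixed v a = c.insertNth a v :=
  insertNth_eq_of_stdRank_eq_self (exists_stdRank_insertNth_self_eq_self v a).choose_spec hc

lemma prod_eq_mul_prod_eraseFixed {M : Type*} [CommMonoid M] (p : α → M) {w : Fin (n + 1) → α}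
    {a : α} {k : Fin (n + 1)} (hk : stdRank w k = k) (hwk : w k = a) :
    ∏ x, p (w x) = p a * ∏ x, p (eraseFixed w a x) := by
  rw [eraseFixed_eq hk hwk, Fin.prod_univ_succAbove _ k, hwk]
  rfl

variable {ι : Type*}

def fixedCounts (w : Fin n → α) (i : ι → α) : ι → ℕ := fun t => fixedCount w (i t)

variable [DecidableEq ι]

lemma fixedCounts_eq_add_single {w : Fin (n + 1) → α} {k : Fin (n + 1)} (hk : stdRank w k = k)
    {i : ι → α} (hi : Function.Injective i) {t₀ : ι} (hwk : w k = i t₀) :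
    fixedCounts w i = fixedCounts (k.removeNth w) i + Pi.single t₀ 1 := by
  funext t
  simp [fixedCounts, fixedCount_eq_add_fixedCount_removeNth hk, hwk, hi.eq_iff, Pi.single_apply,
    eq_comm (a := t₀), add_comm]

lemma exists_stdRank_eq_self_of_add_single_le {w : Fin n → α} {i : ι → α} {l : ι → ℕ} {t₀ : ι}
    (hw : l + Pi.single t₀ 1 ≤ fixedCounts w i) : ∃ k, stdRank w k = k ∧ w k = i t₀ := by
  have hpos : 0 < fixedCount w (i t₀) := by
    have := hw t₀
    simp only [Pi.add_apply, Pi.single_eq_same, fixedCounts] at this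
    omega
  obtain ⟨k, hk⟩ := card_pos.1 hpos
  exact ⟨k, by simpa using hk⟩

noncomputable def eraseFixedEquiv {i : ι → α} (hi : Function.Injective i) (l : ι → ℕ)
    (t₀ : ι) (m : ℕ) :
    {w : Fin (m + 1) → α // l + Pi.single t₀ 1 ≤ fixedCounts w i} ≃
      {v : Fin m → α // l ≤ fixedCounts v i} where
  toFun w := ⟨eraseFixed w.1 (i t₀), by
    obtain ⟨k, hk, hwk⟩ := exists_stdRank_eq_self_of_add_single_le w.2
    rw [eraseFixed_eq hk hwk]
    exact le_of_add_le_add_right (fixedCounts_eq_add_single hk hi hwk ▸ w.2)⟩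
  invFun v := ⟨insertFixed v.1 (i t₀), by
    obtain ⟨c, hc⟩ := exists_stdRank_insertNth_self_eq_self v.1 (i t₀)
    rw [insertFixed_eq hc, fixedCounts_eq_add_single hc hi (Fin.insertNth_apply_same _ _ _),
      Fin.removeNth_insertNth]
    exact add_le_add v.2 le_rfl⟩
  left_inv w := by
    obtain ⟨k, hk, hwk⟩ := exists_stdRank_eq_self_of_add_single_le w.2
    have hw : k.insertNth (i t₀) (k.removeNth w.1) = w.1 := by
      rw [← hwk, Fin.insertNth_self_removeNth]
    refine Subtype.ext ?_
    simp only
    rw [eraseFixed_eq hk hwk, insertFixed_eq (by rwa [hw]), hw]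
  right_inv v := by
    obtain ⟨c, hc⟩ := exists_stdRank_insertNth_self_eq_self v.1 (i t₀)
    refine Subtype.ext ?_
    simp only
    rw [insertFixed_eq hc, eraseFixed_eq hc (Fin.insertNth_apply_same _ _ _),
      Fin.removeNth_insertNth]

theorem tsum_prod_of_le_fixedCounts [Fintype ι] (p : α → ℝ≥0∞) {i : ι → α}
    (hi : Function.Injective i) (n : ℕ) (l : ι → ℕ) :
    ∑' w : {w : Fin n → α // l ≤ fixedCounts w i}, ∏ x, p (w.1 x) =
      if ∑ t, l t ≤ n then (∑' a, p a) ^ (n - ∑ t, l t) * ∏ t, p (i t) ^ l t else 0 := by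
  have hsum (l : ι → ℕ) (t₀ : ι) : ∑ t, (l + Pi.single t₀ 1 : ι → ℕ) t = ∑ t, l t + 1 := by
    simp [sum_add_distrib]
  have hzero (n : ℕ) :
      ∑' w : {w : Fin n → α // 0 ≤ fixedCounts w i}, ∏ x, p (w.1 x) = (∑' a, p a) ^ n := by
    rw [← ENNReal.tsum_prod_eq_pow]
    exact (Equiv.subtypeUnivEquiv (p := fun w => 0 ≤ fixedCounts w i) fun _ => zero_le).tsum_eq
      fun w => ∏ x, p (w x)
  induction n generalizing l with
  | zero =>
    obtain rfl | ⟨l, t₀, rfl⟩ := eq_zero_or_exists_eq_add_single l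
    · simp
    have : IsEmpty {w : Fin 0 → α // l + Pi.single t₀ 1 ≤ fixedCounts w i} :=
      ⟨fun w => by simpa [fixedCounts, fixedCount] using w.2 t₀⟩
    rw [tsum_empty, hsum, if_neg (by omega)]
  | succ m ih =>
    obtain rfl | ⟨l, t₀, rfl⟩ := eq_zero_or_exists_eq_add_single l
    · simp [hzero]
    have hprod : ∏ t, p (i t) ^ (l + Pi.single t₀ 1 : ι → ℕ) t = p (i t₀) * ∏ t, p (i t) ^ l t := by
      simp only [Pi.add_apply, pow_add, prod_mul_distrib, mul_comm (∏ t, p (i t) ^ l t)]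
      simp [Pi.single_apply]
    calc ∑' w : {w : Fin (m + 1) → α // l + Pi.single t₀ 1 ≤ fixedCounts w i}, ∏ x, p (w.1 x)
        = ∑' w, p (i t₀) * ∏ x, p ((eraseFixedEquiv hi l t₀ m w).1 x) := tsum_congr fun w => by
          obtain ⟨k, hk, hwk⟩ := exists_stdRank_eq_self_of_add_single_le w.2
          exact prod_eq_mul_prod_eraseFixed p hk hwk
      _ = p (i t₀) * ∑' v : {v : Fin m → α // l ≤ fixedCounts v i}, ∏ x, p (v.1 x) := by
          rw [ENNReal.tsum_mul_left, (eraseFixedEquiv hi l t₀ m).tsum_eq fun v => ∏ x, p (v.1 x)]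
      _ = _ := by
          rw [ih, hsum, hprod]
          split_ifs <;> first | omega | simp [Nat.add_sub_add_right, mul_left_comm]

end Standardization

open Standardization

theorem stmt8_general {Ω : Type*} [MeasurableSpace Ω] (P : Measure Ω)
    (𝕀 : Set ℝ) (h𝕀 : 𝕀.Countable)
    (μ : Measure ℝ) [IsProbabilityMeasure μ] (hμ : μ 𝕀ᶜ = 0)
    (n : ℕ) (G : Fin n → Ω → ℝ) (hmeas : ∀ x, Measurable (G x))
    (hindep : iIndepFun G P)
    (hdist : ∀ x, Measure.map (G x) P = μ)
    (std : (Fin n → ℝ) → Equiv.Perm (Fin n))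
    (hstd : ∀ (g : Fin n → ℝ) (j k : Fin n),
      std g j < std g k ↔ (g j < g k ∨ (g j = g k ∧ j < k)))
    (r : ℕ) (i : Fin r → ℝ) (hi : ∀ t, i t ∈ 𝕀) (hdist' : Function.Injective i)
    (l : Fin r → ℕ) :
    P {ω | ∀ t : Fin r,
        l t ≤ Set.ncard {x : Fin n | std (fun y => G y ω) x = x ∧ G x ω = i t}} =
      if ∑ t, l t ≤ n then ∏ t, μ {i t} ^ l t else 0 := by
  have hcount (g : Fin n → ℝ) (a : ℝ) : {x | std g x = x ∧ g x = a}.ncard = fixedCount g a :=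
    ncard_fixedPoints_eq_fixedCount (std g) (fun j k => by rw [hstd, Prod.Lex.toLex_lt_toLex]) a
  let i' : Fin r → 𝕀 := fun t => ⟨i t, hi t⟩
  have hi' : Function.Injective i' := fun t t' h => hdist' (congrArg Subtype.val h)
  have hcond (w : Fin n → 𝕀) :
      (∀ t, l t ≤ fixedCount (fun x => (w x : ℝ)) (i t)) ↔ l ≤ fixedCounts w i' := by
    simp only [Pi.le_def, fixedCounts]
    exact forall_congr' fun t => by
      rw [← fixedCount_comp_of_strictMono (Subtype.strictMono_coe (· ∈ 𝕀)) w]; rfl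
  have hμ𝕀 : ∑' a : 𝕀, μ {(a : ℝ)} = 1 := by
    rw [← (prob_compl_eq_zero_iff h𝕀.measurableSet).1 hμ]
    exact tsum_measure_preimage_singleton h𝕀 (f := id) fun a _ => measurableSet_singleton a
  calc P _ = P {ω | ∀ t, l t ≤ fixedCount (fun x => G x ω) (i t)} := by simp_rw [hcount]
    _ = ∑' w : {w : Fin n → 𝕀 // ∀ t, l t ≤ fixedCount (fun x => (w x : ℝ)) (i t)},
          ∏ x, μ {(w.1 x : ℝ)} :=
        measure_setOf_eq_tsum_prod h𝕀 hμ hmeas hindep hdist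
          fun g => ∀ t, l t ≤ fixedCount g (i t)
    _ = ∑' w : {w : Fin n → 𝕀 // l ≤ fixedCounts w i'}, ∏ x, μ {(w.1 x : ℝ)} :=
        (Equiv.subtypeEquivRight hcond).tsum_eq fun w => ∏ x, μ {(w.1 x : ℝ)}
    _ = _ := by
        rw [tsum_prod_of_le_fixedCounts (fun a : 𝕀 => μ {(a : ℝ)}) hi', hμ𝕀, one_pow, one_mul]

/-- let `G = (G_1, …, G_n)` be i.i.d. random variables with values in the
countable set `𝕀 ⊆ ℝ`, with `p_i = μ {i}`, and for `i ∈ 𝕀` let `D_i` be the number of fixed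
points `x` of `std(G)` with `G_x = i`. For pairwise distinct `i_1, …, i_r ∈ 𝕀` and
`l_1, …, l_r ≥ 0`, `P(D_{i_1} ≥ l_1, …, D_{i_r} ≥ l_r)` equals `p_{i_1}^{l_1} ⋯ p_{i_r}^{l_r}`
if `l_1 + ⋯ + l_r ≤ n`, and `0` otherwise. -/
theorem stmt8 {Ω : Type*} [MeasurableSpace Ω] (P : Measure Ω) [IsProbabilityMeasure P]
    (𝕀 : Set ℝ) (h𝕀 : 𝕀.Countable)
    (μ : Measure ℝ) [IsProbabilityMeasure μ] (hμ : μ 𝕀ᶜ = 0)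
    (n : ℕ) (G : Fin n → Ω → ℝ) (hmeas : ∀ x, Measurable (G x))
    (hindep : iIndepFun G P)
    (hdist : ∀ x, Measure.map (G x) P = μ)
    (std : (Fin n → ℝ) → Equiv.Perm (Fin n))
    (hstd : ∀ (g : Fin n → ℝ) (j k : Fin n),
      std g j < std g k ↔ (g j < g k ∨ (g j = g k ∧ j < k)))
    (r : ℕ) (i : Fin r → ℝ) (hi : ∀ t, i t ∈ 𝕀) (hdist' : Function.Injective i)
    (l : Fin r → ℕ) :
    P {ω | ∀ t : Fin r,
        l t ≤ Set.ncard {x : Fin n | std (fun y => G y ω) x = x ∧ G x ω = i t}} =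
      if ∑ t, l t ≤ n then ∏ t, μ {i t} ^ l t else 0 :=
  stmt8_general P 𝕀 h𝕀 μ hμ n G hmeas hindep hdist std hstd r i hi hdist' l
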